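/- arXiv:2302.11375 — 3 statements merged into one kernel-verified Lean document; each statement's English description precedes it below -/
import Mathlib

section
/- Let f̃₁, f̃₂ : ℝ × ℝ → ℂ be real analytic on the square [0,1]². Then the function g̃(t,s) := ∫ₛᵗ f̃₂(t,τ) f̃₁(τ,s) dτ is real analytic in (t,s) on [0,1]². (That is, the class of kernels of the form f̃(t,s)Θ(t−s) with f̃ analytic is closed under the ★-product.) -/
/-!
Substituting `τ = s + u (t - s)` writes the composition as `∫₀¹ F((t, s), u) du`, where
`F(q, u) = (t - s) f̃₂(t, τ) f̃₁(τ, s)` is analytic near `{(t, s)} × [0, 1]`. Such a parametric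
integral is analytic in the parameter. Near a point `(x, u₀)`, re-expanding a power series of `F`
at `(x, u₀ + v)` and restricting it to the first variable gives power series in `x` whose
coefficients are bounded uniformly for small `|v|` and depend continuously on `v`, so they can be
integrated term by term. These local statements are then chained along `[0, 1]` by connectedness.
-/

open MeasureTheory Set
open scoped NNReal ENNReal

section TermwiseIntegration

variable {α E G : Type*} [MeasurableSpace α] {μ : Measure α} [IsFiniteMeasure μ]
  [NormedAddCommGroup E] [NormedSpace ℝ E] [NormedAddCommGroup G] [NormedSpace ℝ G]

theorem hasFPowerSeriesOnBall_integral {F : E → α → G} {c : α → FormalMultilinearSeries ℝ E G}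
    {x : E} {r : ℝ≥0} {B : ℕ → ℝ} (hr : 0 < r) (hc : ∀ n, Integrable (fun u => c u n) μ)
    (hcB : ∀ n, ∀ᵐ u ∂μ, ‖c u n‖ ≤ B n) (hB : Summable fun n => B n * r ^ n)
    (hF : ∀ᵐ u ∂μ, HasFPowerSeriesOnBall (F · u) (c u) x r) :
    HasFPowerSeriesOnBall (fun x' => ∫ u, F x' u ∂μ) (fun n => ∫ u, c u n ∂μ) x r where
  r_le := by
    refine FormalMultilinearSeries.le_radius_of_summable_norm _ <|
      (hB.mul_left (μ.real univ)).of_nonneg_of_le (fun n => by positivity) fun n => ?_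
    rw [← mul_assoc, mul_comm (μ.real univ)]
    gcongr
    exact norm_integral_le_of_norm_le_const (hcB n)
  r_pos := ENNReal.coe_pos.2 hr
  hasSum {y} hy := by
    have hy' : ‖y‖ ≤ r := enorm_le_coe.1 (mem_eball_zero_iff.1 hy).le
    have hterm : ∀ n, ∀ᵐ u ∂μ, ‖c u n (fun _ => y)‖ ≤ B n * r ^ n := fun n => by
      filter_upwards [hcB n] with u hu
      simpa using (c u n).le_mul_prod_of_opNorm_le_of_le hu fun _ => hy'
    have hsum := hasSum_integral_of_summable_integral_norm
      (F := fun n u => c u n (fun _ => y)) (μ := μ)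
      (fun n => (ContinuousMultilinearMap.apply ℝ _ G _).integrable_comp (hc n))
      ((hB.mul_right (μ.real univ)).of_norm_bounded fun n =>
        norm_integral_le_of_norm_le_const (by simpa only [norm_norm] using hterm n))
    simp only [← ContinuousMultilinearMap.integral_apply (hc _)] at hsum
    convert hsum using 1
    refine integral_congr_ae ?_
    filter_upwards [hF] with u hu
    exact (hu.hasSum hy).tsum_eq.symm

end TermwiseIntegration

section Slice

variable {𝕜 E F G : Type*} [NontriviallyNormedField 𝕜] [NormedAddCommGroup E] [NormedSpace 𝕜 E]
  [NormedAddCommGroup F] [NormedSpace 𝕜 F] [NormedAddCommGroup G] [NormedSpace 𝕜 G]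

namespace FormalMultilinearSeries

variable (p : FormalMultilinearSeries 𝕜 (E × F) G)

/-- If `p` is a power series of `f` at `(x, y)`, then `p.fstSlice v` is one of `x' ↦ f (x', y + v)`
at `x`. -/
noncomputable def fstSlice (v : F) : FormalMultilinearSeries 𝕜 E G :=
  (p.changeOrigin (0, v)).compContinuousLinearMap (ContinuousLinearMap.inl 𝕜 E F)

theorem norm_fstSlice_le (v : F) (n : ℕ) : ‖p.fstSlice v n‖ ≤ ‖p.changeOrigin (0, v) n‖ :=
  ((p.changeOrigin (0, v) n).norm_compContinuousLinearMap_le _).trans <|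
    mul_le_of_le_one_right (norm_nonneg _) <|
      Finset.prod_le_one (fun _ _ => norm_nonneg _) fun _ _ =>
        ContinuousLinearMap.norm_inl_le_one ..

theorem exists_norm_fstSlice_le {ρ t : ℝ≥0} (h : (ρ + t : ℝ≥0∞) < p.radius) :
    ∃ B : ℕ → ℝ, Summable (fun n => B n * t ^ n) ∧
      ∀ v : F, ‖v‖ ≤ ρ → ∀ n, ‖p.fstSlice v n‖ ≤ B n := by
  set B : ℕ → ℝ≥0 := fun n =>
    ∑' s : Σ l : ℕ, { s : Finset (Fin (n + l)) // s.card = l }, ‖p (n + s.1)‖₊ * ρ ^ s.1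
  have hρ : (ρ : ℝ≥0∞) < p.radius := (by simp : (ρ : ℝ≥0∞) ≤ ρ + t).trans_lt h
  refine ⟨fun n => B n, ?_, fun v hv n => ?_⟩
  · have hsigma := (NNReal.summable_sigma.1 (p.changeOriginSeries_summable_aux₁ h)).2
    have hB : Summable fun n => B n * t ^ n :=
      hsigma.congr fun n => by simp only [B, NNReal.tsum_mul_right]
    simpa using NNReal.summable_coe.2 hB
  · have hv' : ‖((0 : E), v)‖₊ ≤ ρ := by
      rw [← NNReal.coe_le_coe]; simpa [Prod.nnnorm_mk] using hv
    refine (p.norm_fstSlice_le v n).trans ?_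
    have hchange := p.nnnorm_changeOrigin_le n ((ENNReal.coe_le_coe.2 hv').trans_lt hρ)
    have hsum := p.changeOriginSeries_summable_aux₂ hρ n
    refine NNReal.coe_le_coe.2 (hchange.trans (Summable.tsum_le_tsum (fun s => ?_)
      (NNReal.summable_of_le (fun s => ?_) hsum) hsum)) <;> gcongr

theorem continuousOn_fstSlice [CompleteSpace G] (n : ℕ) :
    ContinuousOn (fun v : F => p.fstSlice v n) (Metric.eball 0 p.radius) := by
  rcases eq_zero_or_pos p.radius with h | h
  · simp [h]
  have hembed : MapsTo (fun v : F => ((0 : E), v)) (Metric.eball 0 p.radius)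
      (Metric.eball 0 p.radius) := fun v hv => by
    simpa [enorm_eq_nnnorm, Prod.nnnorm_mk] using hv
  exact (ContinuousMultilinearMap.compContinuousLinearMapL fun _ => ContinuousLinearMap.inl 𝕜 E F)
    |>.continuous.comp_continuousOn <|
      (p.hasFPowerSeriesOnBall_changeOrigin n h).continuousOn.comp (by fun_prop) hembed

end FormalMultilinearSeries

theorem HasFPowerSeriesOnBall.fstSlice [CompleteSpace G] {p : FormalMultilinearSeries 𝕜 (E × F) G}
    {f : E × F → G} {x : E} {y v : F} {r : ℝ≥0∞} (hf : HasFPowerSeriesOnBall f p (x, y) r)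
    (hv : (‖v‖₊ : ℝ≥0∞) < r) :
    HasFPowerSeriesOnBall (fun x' => f (x', y + v)) (p.fstSlice v) x (r - ‖v‖₊) := by
  have hv' : ‖((0 : E), v)‖₊ = ‖v‖₊ := by simp [Prod.nnnorm_mk]
  have h := hf.changeOrigin (y := ((0 : E), v)) (by rwa [hv'])
  rw [hv'] at h
  refine ⟨?_, h.r_pos, fun {z} hz => ?_⟩
  · have hinl : ‖ContinuousLinearMap.inl 𝕜 E F‖ₑ ≤ 1 := by
      simpa [enorm_eq_nnnorm, ← NNReal.coe_le_one] using
        ContinuousLinearMap.norm_inl_le_one 𝕜 E F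
    calc r - ‖v‖₊ ≤ (p.changeOrigin (0, v)).radius := h.r_le
      _ ≤ (p.changeOrigin (0, v)).radius / ‖ContinuousLinearMap.inl 𝕜 E F‖ₑ := by
        simpa using ENNReal.div_le_div_left hinl _
      _ ≤ (p.fstSlice v).radius :=
        FormalMultilinearSeries.div_le_radius_compContinuousLinearMap _ _
  · have := h.hasSum (y := (z, 0)) (by simpa [enorm_eq_nnnorm, Prod.nnnorm_mk] using hz)
    simpa [FormalMultilinearSeries.fstSlice, Function.comp_def] using this

end Slice

section ParametricIntegral

variable {E G : Type*} [NormedAddCommGroup E] [NormedSpace ℝ E] [NormedAddCommGroup G]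
  [NormedSpace ℝ G] [CompleteSpace G]

theorem HasFPowerSeriesOnBall.analyticAt_setIntegral {F : E × ℝ → G}
    {p : FormalMultilinearSeries ℝ (E × ℝ) G} {x : E} {u₀ : ℝ} {r : ℝ≥0∞} {ρ : ℝ≥0} {s : Set ℝ}
    (hF : HasFPowerSeriesOnBall F p (x, u₀) r) (hρ : (ρ : ℝ≥0∞) < r) (hs : MeasurableSet s)
    (hsρ : s ⊆ Metric.closedBall u₀ ρ) :
    AnalyticAt ℝ (fun x' => ∫ u in s, F (x', u)) x := by
  obtain ⟨t, ht, hρt⟩ := ENNReal.lt_iff_exists_add_pos_lt.1 hρ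
  obtain ⟨B, hB, hcB⟩ := p.exists_norm_fstSlice_le (hρt.trans_le hF.r_le)
  have hnorm : ∀ u ∈ s, ‖u - u₀‖ ≤ ρ := fun u hu => by
    simpa [Real.dist_eq, Real.norm_eq_abs] using hsρ hu
  have : IsFiniteMeasure (volume.restrict s) := isFiniteMeasure_restrict.2 <|
    ((measure_mono hsρ).trans_lt measure_closedBall_lt_top).ne
  refine (hasFPowerSeriesOnBall_integral (F := fun x' u => F (x', u))
    (c := fun u => p.fstSlice (u - u₀)) ht (fun n => ?_) (fun n => ?_) hB ?_).analyticAt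
  · have hmaps : MapsTo (fun u => u - u₀) (Metric.closedBall u₀ ρ) (Metric.eball 0 p.radius) :=
      fun u hu => by
        have : ‖u - u₀‖₊ ≤ ρ := by simpa [← NNReal.coe_le_coe, Real.dist_eq] using hu
        simpa [enorm_eq_nnnorm] using ((ENNReal.coe_le_coe.2 this).trans_lt hρ).trans_le hF.r_le
    exact ((p.continuousOn_fstSlice n).comp (by fun_prop) hmaps).integrableOn_compact
      (isCompact_closedBall u₀ ρ) |>.mono_set hsρ
  · exact ae_restrict_of_forall_mem hs fun u hu => hcB _ (hnorm u hu) n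
  · refine ae_restrict_of_forall_mem hs fun u hu => ?_
    have hu : (‖u - u₀‖₊ : ℝ≥0∞) ≤ ρ := by exact_mod_cast hnorm u hu
    have := (hF.fstSlice (hu.trans_lt hρ)).mono (ENNReal.coe_pos.2 ht) ?_
    · simpa using this
    · exact ENNReal.le_sub_of_add_le_left ENNReal.coe_ne_top <|
        ((by gcongr : (‖u - u₀‖₊ + t : ℝ≥0∞) ≤ ρ + t).trans_lt hρt).le

theorem HasFPowerSeriesOnBall.analyticAt_intervalIntegral {F : E × ℝ → G}
    {p : FormalMultilinearSeries ℝ (E × ℝ) G} {x : E} {u₀ : ℝ} {r : ℝ≥0∞} {ρ : ℝ≥0} {a b : ℝ}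
    (hF : HasFPowerSeriesOnBall F p (x, u₀) r) (hρ : (ρ : ℝ≥0∞) < r)
    (hab : uIcc a b ⊆ Metric.closedBall u₀ ρ) :
    AnalyticAt ℝ (fun x' => ∫ u in a..b, F (x', u)) x :=
  (hF.analyticAt_setIntegral hρ measurableSet_Ioc (Ioc_subset_Icc_self.trans
      (Icc_subset_uIcc.trans hab))).sub
    (hF.analyticAt_setIntegral hρ measurableSet_Ioc (Ioc_subset_Icc_self.trans
      (Icc_subset_uIcc'.trans hab)))

theorem analyticAt_intervalIntegral {F : E × ℝ → G} {x : E} {a b : ℝ}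
    (hF : ∀ u ∈ uIcc a b, AnalyticAt ℝ F (x, u)) :
    AnalyticAt ℝ (fun x' => ∫ u in a..b, F (x', u)) x := by
  obtain ⟨U, V, hU, -, hxU, hV, hUV⟩ := generalized_tube_lemma isCompact_singleton isCompact_uIcc
    (isOpen_analyticAt ℝ F) (by rintro ⟨x', u⟩ ⟨rfl, hu⟩; exact hF u hu)
  have hint : ∀ x' ∈ U, ∀ y ∈ uIcc a b, ∀ z ∈ uIcc a b,
      IntervalIntegrable (fun u => F (x', u)) volume y z := fun x' hx' y hy z hz =>
    ContinuousOn.intervalIntegrable fun u hu =>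
      ((hUV ⟨hx', hV (uIcc_subset_uIcc hy hz hu)⟩).continuousAt.comp
        (Continuous.prodMk_right x').continuousAt).continuousWithinAt
  refine isPreconnected_uIcc.induction₂'
    (fun y z => AnalyticAt ℝ (fun x' => ∫ u in y..z, F (x', u)) x) (fun y hy => ?_)
    (fun y z w hy hz hw hyz hzw => ?_) left_mem_uIcc right_mem_uIcc
  · obtain ⟨p, r, hp⟩ := hF y hy
    obtain ⟨ρ, hρ0, hρr⟩ := ENNReal.lt_iff_exists_nnreal_btwn.1 hp.r_pos
    filter_upwards [nhdsWithin_le_nhds (Metric.closedBall_mem_nhds y (ENNReal.coe_pos.1 hρ0))]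
      with z hz
    have hyz : uIcc y z ⊆ Metric.closedBall y ρ := by
      rw [Real.closedBall_eq_Icc]
      exact uIcc_subset_Icc (by simp) (by rwa [← Real.closedBall_eq_Icc])
    exact ⟨hp.analyticAt_intervalIntegral hρr hyz,
      hp.analyticAt_intervalIntegral hρr (uIcc_comm z y ▸ hyz)⟩
  · refine (hyz.add hzw).congr ?_
    filter_upwards [hU.mem_nhds (hxU rfl)] with x' hx'
    exact intervalIntegral.integral_add_adjacent_intervals (hint x' hx' y hy z hz)
      (hint x' hx' z hz w hw)

end ParametricIntegral

theorem intervalIntegral_eq_integral_zero_one {G : Type*} [NormedAddCommGroup G]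
    [NormedSpace ℝ G] (g : ℝ → G) (s t : ℝ) :
    ∫ τ in s..t, g τ = ∫ u in (0 : ℝ)..1, (t - s) • g (s + u * (t - s)) := by
  have := intervalIntegral.smul_integral_comp_add_mul (a := 0) (b := 1) g (t - s) s
  simp only [mul_zero, add_zero, mul_one, add_sub_cancel] at this
  simp_rw [← this, ← intervalIntegral.integral_smul, mul_comm]

/-- The class of kernels of the form `f̃(t,s)Θ(t−s)` with `f̃` analytic is closed under the
★-product: the Volterra composition of two functions analytic on `[0,1]²` is again analytic
on `[0,1]²`. -/
theorem volterra_composition_analytic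
    (f1 f2 : ℝ × ℝ → ℂ)
    (h1 : AnalyticOnNhd ℝ f1 (Icc (0:ℝ) 1 ×ˢ Icc (0:ℝ) 1))
    (h2 : AnalyticOnNhd ℝ f2 (Icc (0:ℝ) 1 ×ˢ Icc (0:ℝ) 1)) :
    AnalyticOnNhd ℝ (fun p : ℝ × ℝ => ∫ τ in p.2..p.1, f2 (p.1, τ) * f1 (τ, p.2))
      (Icc (0:ℝ) 1 ×ˢ Icc (0:ℝ) 1) := by
  rintro ⟨t, s⟩ ⟨ht, hs⟩
  let σ : (ℝ × ℝ) × ℝ → ℝ := fun q => q.1.2 + q.2 * (q.1.1 - q.1.2)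
  let F : (ℝ × ℝ) × ℝ → ℂ := fun q => (q.1.1 - q.1.2) • (f2 (q.1.1, σ q) * f1 (σ q, q.1.2))
  have hsubst : (fun p : ℝ × ℝ => ∫ τ in p.2..p.1, f2 (p.1, τ) * f1 (τ, p.2)) =
      fun p => ∫ u in (0 : ℝ)..1, F (p, u) :=
    funext fun p => intervalIntegral_eq_integral_zero_one _ _ _
  rw [hsubst]
  refine analyticAt_intervalIntegral (F := F) fun u hu => ?_
  have hσ_mem : σ ((t, s), u) ∈ Icc (0 : ℝ) 1 :=
    (convex_Icc 0 1).add_smul_sub_mem hs ht (by simpa using hu)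
  have hfst : AnalyticAt ℝ (fun q : (ℝ × ℝ) × ℝ => q.1.1) ((t, s), u) :=
    analyticAt_fst.comp analyticAt_fst
  have hsnd : AnalyticAt ℝ (fun q : (ℝ × ℝ) × ℝ => q.1.2) ((t, s), u) :=
    analyticAt_snd.comp analyticAt_fst
  have hσ : AnalyticAt ℝ σ ((t, s), u) := hsnd.add (analyticAt_snd.mul (hfst.sub hsnd))
  have hf2 : AnalyticAt ℝ (fun q => f2 (q.1.1, σ q)) ((t, s), u) :=
    (h2 (t, σ ((t, s), u)) ⟨ht, hσ_mem⟩).comp (f := fun q => (q.1.1, σ q)) (hfst.prod hσ)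
  have hf1 : AnalyticAt ℝ (fun q => f1 (σ q, q.1.2)) ((t, s), u) :=
    (h1 (σ ((t, s), u), s) ⟨hσ_mem, hs⟩).comp (f := fun q => (σ q, q.1.2)) (hσ.prod hsnd)
  exact (hfst.sub hsnd).smul (hf2.mul hf1)
end

section
/- Let Ã : [0,1] → ℂ^{N×N} be real analytic and B̃ : [0,1]² → ℂ^{N×N} be real analytic. Fix s ∈ [0,1]. Define the iterated Volterra kernels of A(t,s) = Ã(t)Θ(t−s) by K₁(t,s) := Ã(t) and K_{k+1}(t,s) := ∫ₛᵗ K_k(t,τ) Ã(τ) dτ, and set C̃(t,s) := Σ_{k≥1} K_k(t,s) (which converges uniformly on 0 ≤ s ≤ t ≤ 1). Then the function U(t) := I_N + ∫ₛᵗ [ C̃(τ,s) + B̃(τ,s) + ∫ₛ^τ C̃(τ,ρ) B̃(ρ,s) dρ ] dτ is the unique continuously differentiable solution on [s,1] of the non-homogeneous initial value problem ∂ₜU(t) = Ã(t) U(t) + B̃(t,s), U(s) = I_N. -/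
/-!
Bounding `‖K_{k+1}(t,s)‖ ≤ M^{k+1} |t - s|^k / k!` gives the uniform convergence and the
continuity of `C̃`. Exchanging the order of integration over the triangle `s ≤ ρ ≤ τ ≤ t` turns
the defining recursion `K_{k+1}(t,s) = ∫ₛᵗ K_k(t,τ) Ã(τ) dτ` into the left-handed one
`K_{k+1}(t,s) = Ã(t) ∫ₛᵗ K_k(τ,s) dτ`, whose sum is the resolvent equation
`C̃(t,s) = Ã(t) (I + ∫ₛᵗ C̃(τ,s) dτ)`. One more exchange shows that the integrand of `U` at `t`
is `Ã(t) U(t) + B̃(t,s)`, so `U` solves the problem by the fundamental theorem of calculus, and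
uniqueness is Grönwall's inequality for a right-hand side that is Lipschitz in `U`. To work with
globally continuous data, `Ã` and `B̃` are first extended from `[0,1]` by clamping, which changes
none of the quantities involved.
-/

open MeasureTheory Set Filter

attribute [local instance] Matrix.frobeniusNormedAddCommGroup Matrix.frobeniusNormedSpace

/-- The iterated Volterra kernels of `A(t,s) = Ã(t)Θ(t−s)`:
`K₁(t,s) = Ã(t)` and `K_{k+1}(t,s) = ∫ₛᵗ K_k(t,τ) Ã(τ) dτ` (entrywise integral). -/
noncomputable def iterK {N : ℕ} (A : ℝ → Matrix (Fin N) (Fin N) ℂ) :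
    ℕ → ℝ → ℝ → Matrix (Fin N) (Fin N) ℂ
  | 0 => fun _ _ => 0
  | 1 => fun t _ => A t
  | (k + 2) => fun t s =>
      Matrix.of fun i j => ∫ τ in s..t, (iterK A (k + 1) t τ * A τ) i j

/-- `C̃(t,s) = Σ_{k ≥ 1} K_k(t,s)`, the analytic part of `Σ_{k ≥ 1} A^{★k}`. -/
noncomputable def resolventSum {N : ℕ} (A : ℝ → Matrix (Fin N) (Fin N) ℂ)
    (t s : ℝ) : Matrix (Fin N) (Fin N) ℂ :=
  ∑' k : ℕ, iterK A (k + 1) t s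

/-- The ★-product closed-form solution
`U = Θ ★ R_★(A) ★ (I_★ + B)` written as a function:
`U(t) = I_N + ∫ₛᵗ [ C̃(τ,s) + B̃(τ,s) + ∫ₛ^τ C̃(τ,ρ) B̃(ρ,s) dρ ] dτ`. -/
noncomputable def solU {N : ℕ} (A : ℝ → Matrix (Fin N) (Fin N) ℂ)
    (B : ℝ × ℝ → Matrix (Fin N) (Fin N) ℂ) (s t : ℝ) :
    Matrix (Fin N) (Fin N) ℂ :=
  1 + Matrix.of fun i j =>
    ∫ τ in s..t,
      (resolventSum A τ s + B (τ, s)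
        + Matrix.of fun i' j' => ∫ ρ in s..τ, (resolventSum A τ ρ * B (ρ, s)) i' j') i j

section NormedRing

variable {R : Type*} [NormedRing R] [NormedAlgebra ℝ R] [CompleteSpace R] {f : ℝ → R} {a b : ℝ}

theorem intervalIntegral.integral_const_mul_of_intervalIntegrable
    (hf : IntervalIntegrable f volume a b) (c : R) :
    ∫ x in a..b, c * f x = c * ∫ x in a..b, f x :=
  (ContinuousLinearMap.mul ℝ R c).intervalIntegral_comp_comm hf

theorem intervalIntegral.integral_mul_const_of_intervalIntegrable
    (hf : IntervalIntegrable f volume a b) (c : R) :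
    ∫ x in a..b, f x * c = (∫ x in a..b, f x) * c :=
  ((ContinuousLinearMap.mul ℝ R).flip c).intervalIntegral_comp_comm hf

end NormedRing

theorem Continuous.intervalIntegral_of_uncurry {X E : Type*} [TopologicalSpace X]
    [NormedAddCommGroup E] [NormedSpace ℝ E] {f : X → ℝ → E}
    (hf : Continuous (Function.uncurry f)) {a b : X → ℝ} (ha : Continuous a) (hb : Continuous b) :
    Continuous fun x => ∫ t in a x..b x, f x t := by
  have hint : ∀ x u v, IntervalIntegrable (f x) volume u v := fun x u v =>
    (hf.comp (Continuous.prodMk_right x)).intervalIntegrable u v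
  have h : (fun x => ∫ t in a x..b x, f x t)
      = fun x => (∫ t in (0 : ℝ)..b x, f x t) - ∫ t in (0 : ℝ)..a x, f x t :=
    funext fun x => (intervalIntegral.integral_interval_sub_left (hint _ _ _) (hint _ _ _)).symm
  rw [h]
  exact (intervalIntegral.continuous_parametric_intervalIntegral_of_continuous hf hb).sub
    (intervalIntegral.continuous_parametric_intervalIntegral_of_continuous hf ha)

theorem intervalIntegral.integral_integral_swap_triangle {E : Type*} [NormedAddCommGroup E]
    [NormedSpace ℝ E] {G : ℝ → ℝ → E} (hG : Continuous (Function.uncurry G)) {a b : ℝ}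
    (hab : a ≤ b) :
    ∫ x in a..b, ∫ y in a..x, G x y = ∫ y in a..b, ∫ x in y..b, G x y := by
  set μ := volume.restrict (Ioc a b)
  set H : ℝ → ℝ → E := fun x y => (Iio x).indicator (G x) y
  have hH : Integrable (Function.uncurry H) (μ.prod μ) := by
    rw [Measure.prod_restrict, ← Measure.volume_eq_prod]
    have hG_int : IntegrableOn (Function.uncurry G) (Ioc a b ×ˢ Ioc a b) :=
      (hG.continuousOn.integrableOn_compact (isCompact_Icc.prod isCompact_Icc)).mono_set
        (prod_mono Ioc_subset_Icc_self Ioc_subset_Icc_self)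
    exact hG_int.indicator (measurableSet_lt measurable_snd measurable_fst)
  have hleft : ∀ x ∈ Ioc a b, ∫ y in a..x, G x y = ∫ y, H x y ∂μ := by
    intro x hx
    have hI : Ioc a b ∩ Iio x = Ioo a x := by
      ext y; simp only [mem_inter_iff, mem_Ioc, mem_Iio, mem_Ioo]
      exact ⟨fun h => ⟨h.1.1, h.2⟩, fun h => ⟨⟨h.1, h.2.le.trans hx.2⟩, h.2⟩⟩
    rw [setIntegral_indicator measurableSet_Iio, hI, intervalIntegral.integral_of_le hx.1.le,
      integral_Ioc_eq_integral_Ioo]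
  have hright : ∀ y ∈ Ioc a b, ∫ x in y..b, G x y = ∫ x, H x y ∂μ := by
    intro y hy
    have hH : (fun x => H x y) = (Ioi y).indicator (fun x => G x y) := by
      ext x; simp only [H, indicator, mem_Iio, mem_Ioi]
    rw [hH, setIntegral_indicator measurableSet_Ioi, Ioc_inter_Ioi, sup_eq_right.2 hy.1.le,
      intervalIntegral.integral_of_le hy.2]
  rw [intervalIntegral.integral_of_le hab, intervalIntegral.integral_of_le hab,
    setIntegral_congr_fun measurableSet_Ioc hleft, setIntegral_congr_fun measurableSet_Ioc hright]
  exact integral_integral_swap hH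

theorem eqOn_of_hasDerivWithinAt_mul_add {R : Type*} [NormedRing R] [NormedSpace ℝ R]
    {a b u v : ℝ → R} {M t₀ t₁ : ℝ} (ha : ∀ t ∈ Ico t₀ t₁, ‖a t‖ ≤ M)
    (hu : ∀ t ∈ Icc t₀ t₁, HasDerivWithinAt u (a t * u t + b t) (Icc t₀ t₁) t)
    (hv : ∀ t ∈ Icc t₀ t₁, HasDerivWithinAt v (a t * v t + b t) (Icc t₀ t₁) t)
    (h₀ : u t₀ = v t₀) : EqOn u v (Icc t₀ t₁) := by
  have hlip : ∀ t ∈ Ico t₀ t₁, LipschitzOnWith M.toNNReal (fun x => a t * x + b t) univ :=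
    fun t ht => LipschitzOnWith.of_dist_le_mul fun x _ y _ => by
      rw [dist_eq_norm, dist_eq_norm, add_sub_add_right_eq_sub, ← mul_sub]
      exact (norm_mul_le _ _).trans (by gcongr; exact (ha t ht).trans M.le_coe_toNNReal)
  have hright : ∀ w : ℝ → R, (∀ t ∈ Icc t₀ t₁,
      HasDerivWithinAt w (a t * w t + b t) (Icc t₀ t₁) t) →
      ∀ t ∈ Ico t₀ t₁, HasDerivWithinAt w (a t * w t + b t) (Ici t) t := fun w hw t ht =>
    (hw t (Ico_subset_Icc_self ht)).mono_of_mem_nhdsWithin (Icc_mem_nhdsGE_of_mem ht)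
  exact ODE_solution_unique_of_mem_Icc_right hlip (fun t ht => (hu t ht).continuousWithinAt)
    (hright u hu) (fun _ _ => mem_univ _) (fun t ht => (hv t ht).continuousWithinAt)
    (hright v hv) (fun _ _ => mem_univ _) h₀

/-- The topology of the Frobenius norm. It is the product topology `instTopologicalSpaceMatrix`,
but not reducibly so; as an instance it lets the normed-space lemmas on integrals and
derivatives apply to matrices. -/
noncomputable abbrev Matrix.frobeniusTopologicalSpace {m n : Type*} [Fintype m] [Fintype n] :
    TopologicalSpace (Matrix m n ℂ) :=
  Matrix.frobeniusNormedAddCommGroup.toUniformSpace.toTopologicalSpace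

section

attribute [local instance] Matrix.frobeniusNormedRing Matrix.frobeniusNormedAlgebra
  Matrix.frobeniusTopologicalSpace

section MatrixIntegral

variable {m n : Type*} [Fintype m] [Fintype n] {f : ℝ → Matrix m n ℂ} {a b : ℝ}

theorem Matrix.of_intervalIntegral_apply (hf : IntervalIntegrable f volume a b) :
    Matrix.of (fun i j => ∫ x in a..b, f x i j) = ∫ x in a..b, f x := by
  ext i j
  exact (Matrix.entryLinearMap ℝ ℂ i j).toContinuousLinearMap.intervalIntegral_comp_comm hf

end MatrixIntegral

section VolterraKernel

open Nat Interval

variable {N : ℕ} {A : ℝ → Matrix (Fin N) (Fin N) ℂ}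

theorem iterK_add_two_of_intervalIntegrable {k : ℕ} {t s : ℝ}
    (h : IntervalIntegrable (fun τ => iterK A (k + 1) t τ * A τ) volume s t) :
    iterK A (k + 2) t s = ∫ τ in s..t, iterK A (k + 1) t τ * A τ :=
  Matrix.of_intervalIntegral_apply h

theorem continuous_iterK (hA : Continuous A) (k : ℕ) :
    Continuous fun p : ℝ × ℝ => iterK A (k + 1) p.1 p.2 := by
  induction k with
  | zero => exact hA.comp continuous_fst
  | succ k ih =>
    have hF : Continuous fun q : ℝ × ℝ => iterK A (k + 1) q.1 q.2 * A q.2 :=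
      ih.mul (hA.comp continuous_snd)
    have h : (fun p : ℝ × ℝ => iterK A (k + 2) p.1 p.2)
        = fun p => ∫ τ in p.2..p.1, iterK A (k + 1) p.1 τ * A τ :=
      funext fun p => iterK_add_two_of_intervalIntegrable
        ((hF.comp (Continuous.prodMk_right p.1)).intervalIntegrable _ _)
    rw [h]
    exact Continuous.intervalIntegral_of_uncurry
      (f := fun (p : ℝ × ℝ) (τ : ℝ) => iterK A (k + 1) p.1 τ * A τ)
      (hF.comp (continuous_fst.fst.prodMk continuous_snd)) continuous_snd continuous_fst

theorem iterK_add_two (hA : Continuous A) (k : ℕ) (t s : ℝ) :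
    iterK A (k + 2) t s = ∫ τ in s..t, iterK A (k + 1) t τ * A τ :=
  iterK_add_two_of_intervalIntegrable
    ((((continuous_iterK hA k).comp (Continuous.prodMk_right t)).mul hA).intervalIntegrable _ _)

theorem norm_iterK_le (hA : Continuous A) {M : ℝ} (hM : ∀ τ, ‖A τ‖ ≤ M) (k : ℕ) (t s : ℝ) :
    ‖iterK A (k + 1) t s‖ ≤ M ^ (k + 1) * |t - s| ^ k / k ! := by
  induction k generalizing s with
  | zero => simpa [iterK] using hM t
  | succ k ih =>
    have hM0 : 0 ≤ M := (norm_nonneg _).trans (hM 0)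
    have hbound : ∀ τ, ‖iterK A (k + 1) t τ * A τ‖ ≤ M ^ (k + 2) / k ! * |τ - t| ^ k := fun τ =>
      calc ‖iterK A (k + 1) t τ * A τ‖ ≤ ‖iterK A (k + 1) t τ‖ * ‖A τ‖ := norm_mul_le _ _
        _ ≤ M ^ (k + 1) * |t - τ| ^ k / k ! * M := by gcongr; exacts [ih τ, hM τ]
        _ = M ^ (k + 2) / k ! * |τ - t| ^ k := by rw [abs_sub_comm]; ring
    rw [iterK_add_two hA, intervalIntegral.norm_intervalIntegral_eq]
    calc _ ≤ ∫ τ in Ι s t, M ^ (k + 2) / k ! * |τ - t| ^ k :=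
          norm_integral_le_of_norm_le (Continuous.integrableOn_uIoc (by fun_prop))
            (Eventually.of_forall hbound)
      _ = M ^ (k + 1 + 1) * |t - s| ^ (k + 1) / (k + 1)! := by
          rw [integral_const_mul, uIoc_comm, integral_pow_abs_sub_uIoc, abs_sub_comm,
            factorial_succ]
          push_cast
          field_simp

end VolterraKernel

section ResolventSeries

open Nat

variable {N : ℕ} {A : ℝ → Matrix (Fin N) (Fin N) ℂ} {M : ℝ}

theorem summable_pow_succ_mul_pow_div_factorial (M R : ℝ) :
    Summable fun k : ℕ => M ^ (k + 1) * R ^ k / k ! :=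
  ((Real.summable_pow_div_factorial (M * R)).mul_left M).congr fun k => by ring

theorem norm_iterK_le_of_abs_sub_le (hA : Continuous A) (hM : ∀ τ, ‖A τ‖ ≤ M) {t s R : ℝ}
    (hR : |t - s| ≤ R) (k : ℕ) : ‖iterK A (k + 1) t s‖ ≤ M ^ (k + 1) * R ^ k / k ! := by
  have hM0 : 0 ≤ M := (norm_nonneg _).trans (hM 0)
  exact (norm_iterK_le hA hM k t s).trans (by gcongr)

theorem summable_iterK (hA : Continuous A) (hM : ∀ τ, ‖A τ‖ ≤ M) (t s : ℝ) :
    Summable fun k => iterK A (k + 1) t s :=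
  (summable_pow_succ_mul_pow_div_factorial M |t - s|).of_norm_bounded
    (norm_iterK_le_of_abs_sub_le hA hM le_rfl)

theorem tendstoUniformlyOn_iterK (hA : Continuous A) (hM : ∀ τ, ‖A τ‖ ≤ M)
    {S : Set (ℝ × ℝ)} {R : ℝ} (hS : ∀ p ∈ S, |p.1 - p.2| ≤ R) :
    TendstoUniformlyOn (fun n (p : ℝ × ℝ) => ∑ k ∈ Finset.range n, iterK A (k + 1) p.1 p.2)
      (fun p => resolventSum A p.1 p.2) atTop S :=
  tendstoUniformlyOn_tsum_nat (summable_pow_succ_mul_pow_div_factorial M R)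
    fun k p hp => norm_iterK_le_of_abs_sub_le hA hM (hS p hp) k

theorem continuous_resolventSum (hA : Continuous A) (hM : ∀ τ, ‖A τ‖ ≤ M) :
    Continuous fun p : ℝ × ℝ => resolventSum A p.1 p.2 := by
  refine continuous_iff_continuousAt.2 fun p => ?_
  have hstrip : IsOpen {q : ℝ × ℝ | |q.1 - q.2| < |p.1 - p.2| + 1} :=
    isOpen_lt (by fun_prop) continuous_const
  exact (continuousOn_tsum (fun k => (continuous_iterK hA k).continuousOn)
    (summable_pow_succ_mul_pow_div_factorial M _)
    fun k q hq => norm_iterK_le_of_abs_sub_le hA hM (le_of_lt hq) k).continuousAt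
    (hstrip.mem_nhds (lt_add_one |p.1 - p.2|))

theorem hasSum_intervalIntegral_iterK (hA : Continuous A) (hM : ∀ τ, ‖A τ‖ ≤ M) (t s : ℝ) :
    HasSum (fun k => ∫ τ in s..t, iterK A (k + 1) τ s) (∫ τ in s..t, resolventSum A τ s) :=
  intervalIntegral.hasSum_integral_of_dominated_convergence
    (fun k _ => M ^ (k + 1) * |t - s| ^ k / k !)
    (fun k => ((continuous_iterK hA k).comp (Continuous.prodMk_left s)).aestronglyMeasurable)
    (fun k => Eventually.of_forall fun _ hτ =>
      norm_iterK_le_of_abs_sub_le hA hM (abs_sub_left_of_mem_uIcc (uIoc_subset_uIcc hτ)) k)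
    (Eventually.of_forall fun _ _ => summable_pow_succ_mul_pow_div_factorial M _)
    intervalIntegrable_const
    (Eventually.of_forall fun τ _ => (summable_iterK hA hM τ s).hasSum)

end ResolventSeries

section ResolventEquation

variable {N : ℕ} {A : ℝ → Matrix (Fin N) (Fin N) ℂ} {M : ℝ}

theorem iterK_add_two_eq_mul_intervalIntegral (hA : Continuous A) (k : ℕ) {t s : ℝ}
    (hst : s ≤ t) : iterK A (k + 2) t s = A t * ∫ τ in s..t, iterK A (k + 1) τ s := by
  induction k generalizing s with
  | zero =>
    rw [iterK_add_two hA]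
    exact intervalIntegral.integral_const_mul_of_intervalIntegrable
      (hA.intervalIntegrable s t) (A t)
  | succ k ih =>
    have hK : Continuous fun p : ℝ × ℝ => iterK A (k + 1) p.1 p.2 * A p.2 :=
      (continuous_iterK hA k).mul (hA.comp continuous_snd)
    have hJ : Continuous fun τ => ∫ σ in τ..t, iterK A (k + 1) σ τ * A τ :=
      Continuous.intervalIntegral_of_uncurry (f := fun τ σ => iterK A (k + 1) σ τ * A τ)
        (hK.comp continuous_swap) continuous_id continuous_const
    calc iterK A (k + 1 + 2) t s = ∫ τ in s..t, iterK A (k + 2) t τ * A τ :=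
          iterK_add_two hA _ t s
      _ = ∫ τ in s..t, A t * ∫ σ in τ..t, iterK A (k + 1) σ τ * A τ := by
          refine intervalIntegral.integral_congr fun τ hτ => ?_
          rw [uIcc_of_le hst] at hτ
          rw [ih hτ.2, mul_assoc, intervalIntegral.integral_mul_const_of_intervalIntegrable]
          exact ((continuous_iterK hA k).comp (Continuous.prodMk_left τ)).intervalIntegrable _ _
      _ = A t * ∫ σ in s..t, ∫ τ in s..σ, iterK A (k + 1) σ τ * A τ := by
          rw [intervalIntegral.integral_const_mul_of_intervalIntegrable
            (hJ.intervalIntegrable s t), ← intervalIntegral.integral_integral_swap_triangle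
            (G := fun σ τ => iterK A (k + 1) σ τ * A τ) hK hst]
      _ = A t * ∫ σ in s..t, iterK A (k + 2) σ s := by
          simp only [iterK_add_two hA]

theorem resolventSum_eq_add_mul_intervalIntegral (hA : Continuous A) (hM : ∀ τ, ‖A τ‖ ≤ M)
    {t s : ℝ} (hst : s ≤ t) :
    resolventSum A t s = A t + A t * ∫ τ in s..t, resolventSum A τ s := by
  have htail : HasSum (fun k => iterK A (k + 2) t s) (A t * ∫ τ in s..t, resolventSum A τ s) := by
    simpa only [iterK_add_two_eq_mul_intervalIntegral hA _ hst]
      using (hasSum_intervalIntegral_iterK hA hM t s).mul_left (A t)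
  change ∑' k, iterK A (k + 1) t s = _
  rw [(summable_iterK hA hM t s).tsum_eq_zero_add, htail.tsum_eq]
  rfl

theorem intervalIntegral_resolventSum_mul (hA : Continuous A) (hM : ∀ τ, ‖A τ‖ ≤ M)
    {F : ℝ → Matrix (Fin N) (Fin N) ℂ} (hF : Continuous F) {t s : ℝ} (hst : s ≤ t) :
    ∫ ρ in s..t, resolventSum A t ρ * F ρ
      = A t * ((∫ ρ in s..t, F ρ) + ∫ τ in s..t, ∫ ρ in s..τ, resolventSum A τ ρ * F ρ) := by
  have hC := continuous_resolventSum hA hM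
  have hG : Continuous fun p : ℝ × ℝ => resolventSum A p.1 p.2 * F p.2 :=
    hC.mul (hF.comp continuous_snd)
  have hJ : Continuous fun ρ => ∫ τ in ρ..t, resolventSum A τ ρ * F ρ :=
    Continuous.intervalIntegral_of_uncurry (f := fun ρ τ => resolventSum A τ ρ * F ρ)
      (hG.comp continuous_swap) continuous_id continuous_const
  calc ∫ ρ in s..t, resolventSum A t ρ * F ρ
      = ∫ ρ in s..t, (A t * F ρ + A t * ∫ τ in ρ..t, resolventSum A τ ρ * F ρ) := by
        refine intervalIntegral.integral_congr fun ρ hρ => ?_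
        rw [uIcc_of_le hst] at hρ
        rw [resolventSum_eq_add_mul_intervalIntegral hA hM hρ.2, add_mul, mul_assoc,
          intervalIntegral.integral_mul_const_of_intervalIntegrable]
        exact (hC.comp (Continuous.prodMk_left ρ)).intervalIntegrable _ _
    _ = A t * ((∫ ρ in s..t, F ρ) + ∫ ρ in s..t, ∫ τ in ρ..t, resolventSum A τ ρ * F ρ) := by
        have hAF : IntervalIntegrable (fun ρ => A t * F ρ) volume s t :=
          (continuous_const.mul hF).intervalIntegrable _ _
        have hAJ : IntervalIntegrable (fun ρ => A t * ∫ τ in ρ..t, resolventSum A τ ρ * F ρ)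
            volume s t :=
          (continuous_const.mul hJ).intervalIntegrable _ _
        rw [intervalIntegral.integral_add hAF hAJ,
          intervalIntegral.integral_const_mul_of_intervalIntegrable (hF.intervalIntegrable _ _),
          intervalIntegral.integral_const_mul_of_intervalIntegrable (hJ.intervalIntegrable _ _),
          mul_add]
    _ = _ := by
        rw [intervalIntegral.integral_integral_swap_triangle
          (G := fun τ ρ => resolventSum A τ ρ * F ρ) hG hst]

end ResolventEquation

section Solution

variable {N : ℕ} {A : ℝ → Matrix (Fin N) (Fin N) ℂ} {B : ℝ × ℝ → Matrix (Fin N) (Fin N) ℂ}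
  {M : ℝ}

/-- The kernel of `R_★(A) ★ (I_★ + B)` at `(τ, s)`, without its `δ`-part. -/
noncomputable def solUIntegrand (A : ℝ → Matrix (Fin N) (Fin N) ℂ)
    (B : ℝ × ℝ → Matrix (Fin N) (Fin N) ℂ) (s τ : ℝ) : Matrix (Fin N) (Fin N) ℂ :=
  resolventSum A τ s + B (τ, s) + ∫ ρ in s..τ, resolventSum A τ ρ * B (ρ, s)

theorem continuous_intervalIntegral_resolventSum_mul (hA : Continuous A) (hM : ∀ τ, ‖A τ‖ ≤ M)
    {F : ℝ → Matrix (Fin N) (Fin N) ℂ} (hF : Continuous F) (s : ℝ) :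
    Continuous fun τ => ∫ ρ in s..τ, resolventSum A τ ρ * F ρ :=
  Continuous.intervalIntegral_of_uncurry (f := fun τ ρ => resolventSum A τ ρ * F ρ)
    ((continuous_resolventSum hA hM).mul (hF.comp continuous_snd)) continuous_const continuous_id

theorem continuous_solUIntegrand (hA : Continuous A) (hM : ∀ τ, ‖A τ‖ ≤ M) (hB : Continuous B)
    (s : ℝ) : Continuous (solUIntegrand A B s) := by
  have hBs : Continuous fun τ => B (τ, s) := hB.comp (Continuous.prodMk_left s)
  exact (((continuous_resolventSum hA hM).comp (Continuous.prodMk_left s)).add hBs).add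
    (continuous_intervalIntegral_resolventSum_mul hA hM hBs s)

theorem solU_self (A : ℝ → Matrix (Fin N) (Fin N) ℂ) (B : ℝ × ℝ → Matrix (Fin N) (Fin N) ℂ)
    (s : ℝ) : solU A B s s = 1 := by
  simp only [solU, intervalIntegral.integral_same]
  exact add_eq_left.2 rfl

theorem solU_eq_one_add_intervalIntegral (hA : Continuous A) (hM : ∀ τ, ‖A τ‖ ≤ M)
    (hB : Continuous B) (s t : ℝ) :
    solU A B s t = 1 + ∫ τ in s..t, solUIntegrand A B s τ := by
  have hC := continuous_resolventSum hA hM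
  have hinner : ∀ τ, (Matrix.of fun i j => ∫ ρ in s..τ, (resolventSum A τ ρ * B (ρ, s)) i j)
      = ∫ ρ in s..τ, resolventSum A τ ρ * B (ρ, s) := fun τ =>
    Matrix.of_intervalIntegral_apply (((hC.comp (Continuous.prodMk_right τ)).mul
      (hB.comp (Continuous.prodMk_left s))).intervalIntegrable _ _)
  simp only [solU, hinner]
  exact congrArg (1 + ·) (Matrix.of_intervalIntegral_apply (f := solUIntegrand A B s)
    ((continuous_solUIntegrand hA hM hB s).intervalIntegrable s t))

theorem hasDerivAt_solU (hA : Continuous A) (hM : ∀ τ, ‖A τ‖ ≤ M) (hB : Continuous B)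
    (s t : ℝ) : HasDerivAt (solU A B s) (solUIntegrand A B s t) t := by
  rw [funext (solU_eq_one_add_intervalIntegral hA hM hB s)]
  exact ((continuous_solUIntegrand hA hM hB s).integral_hasStrictDerivAt s t).hasDerivAt.const_add 1

theorem solUIntegrand_eq (hA : Continuous A) (hM : ∀ τ, ‖A τ‖ ≤ M) (hB : Continuous B)
    {s t : ℝ} (hst : s ≤ t) : solUIntegrand A B s t = A t * solU A B s t + B (t, s) := by
  have hCs : Continuous fun τ => resolventSum A τ s :=
    (continuous_resolventSum hA hM).comp (Continuous.prodMk_left s)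
  have hBs : Continuous fun τ => B (τ, s) := hB.comp (Continuous.prodMk_left s)
  have hsplit : ∫ τ in s..t, solUIntegrand A B s τ
      = (∫ τ in s..t, resolventSum A τ s) + (∫ τ in s..t, B (τ, s))
        + ∫ τ in s..t, ∫ ρ in s..τ, resolventSum A τ ρ * B (ρ, s) := by
    rw [← intervalIntegral.integral_add (hCs.intervalIntegrable _ _) (hBs.intervalIntegrable _ _),
      ← intervalIntegral.integral_add (f := fun τ => resolventSum A τ s + B (τ, s))
        ((hCs.add hBs).intervalIntegrable _ _)
        ((continuous_intervalIntegral_resolventSum_mul hA hM hBs s).intervalIntegrable _ _)]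
    rfl
  rw [solU_eq_one_add_intervalIntegral hA hM hB, hsplit, solUIntegrand,
    resolventSum_eq_add_mul_intervalIntegral hA hM hst,
    intervalIntegral_resolventSum_mul hA hM hBs hst]
  noncomm_ring

end Solution

section Locality

variable {N : ℕ} {A A' : ℝ → Matrix (Fin N) (Fin N) ℂ}
  {B B' : ℝ × ℝ → Matrix (Fin N) (Fin N) ℂ} {M : ℝ}

theorem iterK_congr (k : ℕ) {t s : ℝ} (h : EqOn A A' (uIcc s t)) :
    iterK A (k + 1) t s = iterK A' (k + 1) t s := by
  induction k generalizing s with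
  | zero => exact h right_mem_uIcc
  | succ k ih =>
    refine congrArg Matrix.of (funext₂ fun i j => intervalIntegral.integral_congr fun τ hτ => ?_)
    rw [ih (h.mono (uIcc_subset_uIcc_right hτ)), h hτ]

theorem resolventSum_congr {t s : ℝ} (h : EqOn A A' (uIcc s t)) :
    resolventSum A t s = resolventSum A' t s :=
  tsum_congr fun k => iterK_congr k h

theorem solU_congr {s t : ℝ} (hA : EqOn A A' (uIcc s t)) (hB : EqOn B B' (uIcc s t ×ˢ {s})) :
    solU A B s t = solU A' B' s t := by
  refine congrArg (1 + ·) (congrArg Matrix.of (funext₂ fun i j =>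
    intervalIntegral.integral_congr fun τ hτ =>
      congrArg (fun X : Matrix (Fin N) (Fin N) ℂ => X i j) ?_))
  have hsub : uIcc s τ ⊆ uIcc s t := uIcc_subset_uIcc_left hτ
  congr 1
  · rw [resolventSum_congr (hA.mono hsub), hB (mk_mem_prod hτ (mem_singleton s))]
  · refine congrArg Matrix.of (funext₂ fun i j =>
      intervalIntegral.integral_congr fun ρ hρ => ?_)
    rw [resolventSum_congr (hA.mono ((uIcc_subset_uIcc_right hρ).trans hsub)),
      hB (mk_mem_prod (hsub hρ) (mem_singleton s))]

theorem tendstoUniformlyOn_iterK_of_eqOn (hA' : Continuous A') (hM : ∀ τ, ‖A' τ‖ ≤ M)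
    {a b : ℝ} (h : EqOn A A' (Icc a b)) :
    TendstoUniformlyOn (fun n (p : ℝ × ℝ) => ∑ k ∈ Finset.range n, iterK A (k + 1) p.1 p.2)
      (fun p => resolventSum A p.1 p.2) atTop {p : ℝ × ℝ | a ≤ p.2 ∧ p.2 ≤ p.1 ∧ p.1 ≤ b} := by
  have htri : ∀ p ∈ {p : ℝ × ℝ | a ≤ p.2 ∧ p.2 ≤ p.1 ∧ p.1 ≤ b},
      |p.1 - p.2| ≤ b - a ∧ EqOn A' A (uIcc p.2 p.1) := fun p hp =>
    ⟨abs_sub_le_iff.2 ⟨by linarith [hp.1, hp.2.2], by linarith [hp.1, hp.2.1, hp.2.2]⟩,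
      (h.mono (uIcc_subset_Icc ⟨hp.1, hp.2.1.trans hp.2.2⟩ ⟨hp.1.trans hp.2.1, hp.2.2⟩)).symm⟩
  exact ((tendstoUniformlyOn_iterK hA' hM fun p hp => (htri p hp).1).congr
    (Eventually.of_forall fun _ p hp => Finset.sum_congr rfl fun k _ => iterK_congr k (htri p hp).2)
    ).congr_right fun p hp => resolventSum_congr (htri p hp).2

theorem hasDerivWithinAt_solU_of_eqOn (hA' : Continuous A') (hM : ∀ τ, ‖A' τ‖ ≤ M)
    (hB' : Continuous B') {s b t : ℝ} (hA : EqOn A A' (Icc s b)) (hB : EqOn B B' (Icc s b ×ˢ {s}))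
    (ht : t ∈ Icc s b) :
    HasDerivWithinAt (solU A B s) (A t * solU A B s t + B (t, s)) (Icc s b) t := by
  have hU : EqOn (solU A B s) (solU A' B' s) (Icc s b) := fun τ hτ =>
    have hsub : uIcc s τ ⊆ Icc s b := uIcc_subset_Icc (left_mem_Icc.2 (hτ.1.trans hτ.2)) hτ
    solU_congr (hA.mono hsub) (hB.mono (prod_mono hsub subset_rfl))
  rw [hA ht, hB (mk_mem_prod ht (mem_singleton s)), hU ht, ← solUIntegrand_eq hA' hM hB' ht.1]
  exact (hasDerivAt_solU hA' hM hB' s t).hasDerivWithinAt.congr hU (hU ht)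

end Locality

end

/-- The function `U(t) = I_N + ∫ₛᵗ [C̃(τ,s) + B̃(τ,s) + ∫ₛ^τ C̃(τ,ρ)B̃(ρ,s) dρ] dτ`
is the unique (continuously) differentiable solution on `[s,1]` of the
non-homogeneous initial value problem `∂ₜU(t) = Ã(t)U(t) + B̃(t,s)`, `U(s) = I_N`;
moreover the series defining `C̃` converges uniformly on `{0 ≤ s ≤ t ≤ 1}`. -/
theorem solU_unique_solution {N : ℕ}
    (A : ℝ → Matrix (Fin N) (Fin N) ℂ)
    (B : ℝ × ℝ → Matrix (Fin N) (Fin N) ℂ)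
    (hA : AnalyticOnNhd ℝ A (Icc (0:ℝ) 1))
    (hB : AnalyticOnNhd ℝ B (Icc (0:ℝ) 1 ×ˢ Icc (0:ℝ) 1))
    (s : ℝ) (hs : s ∈ Icc (0:ℝ) 1) :
    TendstoUniformlyOn
      (fun n (p : ℝ × ℝ) => ∑ k ∈ Finset.range n, iterK A (k + 1) p.1 p.2)
      (fun p => resolventSum A p.1 p.2) atTop
      {p : ℝ × ℝ | 0 ≤ p.2 ∧ p.2 ≤ p.1 ∧ p.1 ≤ 1} ∧
    solU A B s s = 1 ∧
    (∀ t ∈ Icc s 1,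
      HasDerivWithinAt (solU A B s) (A t * solU A B s t + B (t, s)) (Icc s 1) t) ∧
    ∀ V : ℝ → Matrix (Fin N) (Fin N) ℂ,
      (∀ t ∈ Icc s 1, HasDerivWithinAt V (A t * V t + B (t, s)) (Icc s 1) t) →
      V s = 1 → EqOn V (solU A B s) (Icc s 1) := by
  set π : ℝ → ℝ := fun x => projIcc (0:ℝ) 1 zero_le_one x
  have hπ : ∀ x, π x ∈ Icc (0:ℝ) 1 := fun x => (projIcc (0:ℝ) 1 zero_le_one x).2
  have hπ_eq : EqOn π id (Icc 0 1) := fun x hx => congrArg Subtype.val (projIcc_of_mem _ hx)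
  have hA' : Continuous (A ∘ π) :=
    hA.continuousOn.comp_continuous (continuous_subtype_val.comp continuous_projIcc) hπ
  have hB' : Continuous (B ∘ Prod.map π π) :=
    hB.continuousOn.comp_continuous (by fun_prop) fun p => ⟨hπ p.1, hπ p.2⟩
  obtain ⟨M, hM⟩ := isCompact_Icc.exists_bound_of_continuousOn hA.continuousOn
  have hM' : ∀ τ, ‖(A ∘ π) τ‖ ≤ M := fun τ => hM _ (hπ τ)
  have hAA' : EqOn A (A ∘ π) (Icc 0 1) := fun x hx => by simp [hπ_eq hx]
  have hBB' : EqOn B (B ∘ Prod.map π π) (Icc 0 1 ×ˢ Icc 0 1) := fun p hp => by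
    change B p = B (π p.1, π p.2)
    rw [hπ_eq hp.1, hπ_eq hp.2]
    rfl
  have hsub : Icc s 1 ⊆ Icc 0 1 := Icc_subset_Icc_left hs.1
  have hderiv : ∀ t ∈ Icc s 1,
      HasDerivWithinAt (solU A B s) (A t * solU A B s t + B (t, s)) (Icc s 1) t :=
    fun t => hasDerivWithinAt_solU_of_eqOn hA' hM' hB' (hAA'.mono hsub)
      (hBB'.mono (prod_mono hsub (singleton_subset_iff.2 hs)))
  refine ⟨tendstoUniformlyOn_iterK_of_eqOn hA' hM' hAA', solU_self A B s, hderiv,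
    fun V hV hV0 => ?_⟩
  let : NormedRing (Matrix (Fin N) (Fin N) ℂ) := Matrix.frobeniusNormedRing
  exact eqOn_of_hasDerivWithinAt_mul_add (fun t ht => hM t (hsub (Ico_subset_Icc_self ht)))
    hV hderiv (hV0.trans (solU_self A B s).symm)
end

section
/- Let F = (F_{k,j})_{k,j∈ℕ} and G = (G_{j,ℓ})_{j,ℓ∈ℕ} be infinite complex matrices such that there exist K_F, K_G > 0 and ρ_F, ρ_G ∈ (0,1) with |F_{k,j}| ≤ K_F ρ_F^{|k−j|} and |G_{j,ℓ}| ≤ K_G ρ_G^{|j−ℓ|} for all indices. Then for every k, ℓ ∈ ℕ the series Σ_{j∈ℕ} F_{k,j} G_{j,ℓ} converges absolutely, and there exist K > 0 and ρ ∈ (0,1) such that |Σ_{j∈ℕ} F_{k,j} G_{j,ℓ}| ≤ K ρ^{|k−ℓ|} for all k, ℓ ∈ ℕ. In particular, the class of infinite matrices with geometric off-diagonal decay is closed under matrix multiplication. -/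
open Set

lemma summable_pow_natDist {ρ : ℝ} (h0 : 0 < ρ) (h1 : ρ < 1) (k : ℕ) :
    Summable fun j : ℕ => ρ ^ (Nat.dist k j) := by
  have hg : Summable fun j : ℕ => ρ⁻¹ ^ k * ρ ^ j :=
    (summable_geometric_of_lt_one h0.le h1).mul_left _
  refine Summable.of_nonneg_of_le (fun j => by positivity) (fun j => ?_) hg
  have hd : j - k ≤ Nat.dist k j := by
    rw [Nat.dist_comm]; exact Nat.sub_le_iff_le_add.mpr (by have := Nat.dist_tri_right' j k; omega)
  have h2 : ρ ^ (Nat.dist k j) ≤ ρ ^ (j - k) :=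
    pow_le_pow_of_le_one h0.le h1.le hd
  have h3 : ρ ^ (j - k) ≤ ρ⁻¹ ^ k * ρ ^ j := by
    rw [inv_pow, inv_mul_eq_div, le_div_iff₀ (by positivity), ← pow_add]
    exact pow_le_pow_of_le_one h0.le h1.le (by omega)
  linarith

lemma tsum_pow_natDist_le {ρ : ℝ} (h0 : 0 < ρ) (h1 : ρ < 1) (k : ℕ) :
    ∑' j : ℕ, ρ ^ (Nat.dist k j) ≤ 2 / (1 - ρ) := by
  have hs := summable_pow_natDist h0 h1 k
  have hgeo : Summable fun j : ℕ => ρ ^ j := summable_geometric_of_lt_one h0.le h1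
  have hsplit := Summable.sum_add_tsum_nat_add k hs
  have htail : (∑' j : ℕ, ρ ^ (Nat.dist k (j + k))) = ∑' j : ℕ, ρ ^ j := by
    congr 1; funext j; congr 1
    rw [Nat.dist_comm, Nat.dist_eq_sub_of_le_right (Nat.le_add_left k j)]
    omega
  have h1' : (0:ℝ) < 1 - ρ := by linarith
  have htsum_geo : (∑' j : ℕ, ρ ^ j) = (1 - ρ)⁻¹ := tsum_geometric_of_lt_one h0.le h1
  have hhead : (∑ j ∈ Finset.range k, ρ ^ (Nat.dist k j)) ≤ (1 - ρ)⁻¹ := by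
    have heq : (∑ j ∈ Finset.range k, ρ ^ (Nat.dist k j)) = ∑ j ∈ Finset.range k, ρ ^ (j + 1) := by
      rw [← Finset.sum_range_reflect]
      apply Finset.sum_congr rfl
      intro j hj
      simp only [Finset.mem_range] at hj
      congr 1
      rw [Nat.dist_eq_sub_of_le_right (by omega)]
      omega
    rw [heq]
    have hsum : (∑ j ∈ Finset.range k, ρ ^ j) ≤ (1 - ρ)⁻¹ := by
      rw [← htsum_geo]
      exact Summable.sum_le_tsum _ (fun j _ => by positivity) hgeo
    have hS0 : (0:ℝ) ≤ ∑ j ∈ Finset.range k, ρ ^ j :=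
      Finset.sum_nonneg fun j _ => by positivity
    have heq2 : (∑ j ∈ Finset.range k, ρ ^ (j + 1)) = ρ * ∑ j ∈ Finset.range k, ρ ^ j := by
      rw [Finset.mul_sum]
      exact Finset.sum_congr rfl fun j _ => by ring
    rw [heq2]
    have h2 : ρ * (∑ j ∈ Finset.range k, ρ ^ j) ≤ ρ * (1 - ρ)⁻¹ :=
      mul_le_mul_of_nonneg_left hsum h0.le
    have h3 : ρ * (1 - ρ)⁻¹ ≤ 1 * (1 - ρ)⁻¹ :=
      mul_le_mul_of_nonneg_right h1.le (by positivity)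
    linarith
  rw [← hsplit, htail, htsum_geo]
  rw [div_eq_mul_inv, two_mul]
  linarith

/-- The class of infinite matrices with geometric off-diagonal decay is closed under
matrix multiplication: the entrywise series defining the product converge absolutely
and the product again has geometric off-diagonal decay. -/
theorem offdiagonal_decay_mul
    (F G : ℕ → ℕ → ℂ)
    (K_F K_G : ℝ) (hKF : 0 < K_F) (hKG : 0 < K_G)
    (ρ_F ρ_G : ℝ) (hρF : ρ_F ∈ Ioo (0:ℝ) 1) (hρG : ρ_G ∈ Ioo (0:ℝ) 1)
    (hF : ∀ k j : ℕ, ‖F k j‖ ≤ K_F * ρ_F ^ (Nat.dist k j))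
    (hG : ∀ j ℓ : ℕ, ‖G j ℓ‖ ≤ K_G * ρ_G ^ (Nat.dist j ℓ)) :
    (∀ k ℓ : ℕ, Summable fun j : ℕ => ‖F k j * G j ℓ‖) ∧
    ∃ K > (0:ℝ), ∃ ρ ∈ Ioo (0:ℝ) 1,
      ∀ k ℓ : ℕ, ‖∑' j : ℕ, F k j * G j ℓ‖ ≤ K * ρ ^ (Nat.dist k ℓ) := by
  obtain ⟨hρF0, hρF1⟩ := hρF
  obtain ⟨hρG0, hρG1⟩ := hρG
  set r : ℝ := max ρ_F ρ_G with hr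
  have hr0 : 0 < r := lt_max_of_lt_left hρF0
  have hr1 : r < 1 := max_lt hρF1 hρG1
  set ρ : ℝ := Real.sqrt r with hρ
  have hρ0 : 0 < ρ := Real.sqrt_pos.mpr hr0
  have hρ1 : ρ < 1 := by
    rw [hρ, show (1:ℝ) = Real.sqrt 1 by simp]
    exact Real.sqrt_lt_sqrt hr0.le hr1
  have hρsq : ρ * ρ = r := Real.mul_self_sqrt hr0.le
  -- pointwise bound
  have hbound : ∀ k ℓ j : ℕ, ‖F k j * G j ℓ‖ ≤
      (K_F * K_G * ρ ^ (Nat.dist k ℓ)) * ρ ^ (Nat.dist k j) := by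
    intro k ℓ j
    have h1 : ‖F k j * G j ℓ‖ ≤ (K_F * ρ_F ^ (Nat.dist k j)) * (K_G * ρ_G ^ (Nat.dist j ℓ)) := by
      rw [norm_mul]
      exact mul_le_mul (hF k j) (hG j ℓ) (norm_nonneg _)
        (le_of_lt (by positivity))
    have h2 : ρ_F ^ (Nat.dist k j) ≤ r ^ (Nat.dist k j) :=
      pow_le_pow_left₀ hρF0.le (le_max_left _ _) _
    have h3 : ρ_G ^ (Nat.dist j ℓ) ≤ r ^ (Nat.dist j ℓ) :=
      pow_le_pow_left₀ hρG0.le (le_max_right _ _) _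
    have h4 : r ^ (Nat.dist k j) * r ^ (Nat.dist j ℓ) =
        ρ ^ (2 * (Nat.dist k j + Nat.dist j ℓ)) := by
      rw [← pow_add, ← hρsq]
      rw [show ρ * ρ = ρ ^ 2 by ring, ← pow_mul]
    have htri : Nat.dist k ℓ + Nat.dist k j ≤ 2 * (Nat.dist k j + Nat.dist j ℓ) := by
      have := Nat.dist.triangle_inequality k j ℓ
      omega
    have h5 : ρ ^ (2 * (Nat.dist k j + Nat.dist j ℓ)) ≤
        ρ ^ (Nat.dist k ℓ + Nat.dist k j) :=
      pow_le_pow_of_le_one hρ0.le hρ1.le htri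
    calc ‖F k j * G j ℓ‖ ≤ (K_F * ρ_F ^ (Nat.dist k j)) * (K_G * ρ_G ^ (Nat.dist j ℓ)) := h1
      _ ≤ (K_F * r ^ (Nat.dist k j)) * (K_G * r ^ (Nat.dist j ℓ)) := by
          apply mul_le_mul
          · exact mul_le_mul_of_nonneg_left h2 hKF.le
          · exact mul_le_mul_of_nonneg_left h3 hKG.le
          · positivity
          · positivity
      _ = (K_F * K_G) * (r ^ (Nat.dist k j) * r ^ (Nat.dist j ℓ)) := by ring
      _ = (K_F * K_G) * ρ ^ (2 * (Nat.dist k j + Nat.dist j ℓ)) := by rw [h4]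
      _ ≤ (K_F * K_G) * ρ ^ (Nat.dist k ℓ + Nat.dist k j) :=
          mul_le_mul_of_nonneg_left h5 (by positivity)
      _ = (K_F * K_G * ρ ^ (Nat.dist k ℓ)) * ρ ^ (Nat.dist k j) := by rw [pow_add]; ring
  have hsummable : ∀ k ℓ : ℕ, Summable fun j : ℕ => ‖F k j * G j ℓ‖ := by
    intro k ℓ
    exact Summable.of_nonneg_of_le (fun j => norm_nonneg _) (hbound k ℓ)
      ((summable_pow_natDist hρ0 hρ1 k).mul_left _)
  refine ⟨hsummable, K_F * K_G * (2 / (1 - ρ)), mul_pos (mul_pos hKF hKG) (div_pos two_pos (by linarith)), ρ, ⟨hρ0, hρ1⟩, ?_⟩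
  intro k ℓ
  have h6 : ‖∑' j : ℕ, F k j * G j ℓ‖ ≤ ∑' j : ℕ, ‖F k j * G j ℓ‖ :=
    norm_tsum_le_tsum_norm (hsummable k ℓ)
  have h7 : (∑' j : ℕ, ‖F k j * G j ℓ‖) ≤
      ∑' j : ℕ, (K_F * K_G * ρ ^ (Nat.dist k ℓ)) * ρ ^ (Nat.dist k j) :=
    Summable.tsum_le_tsum (hbound k ℓ) (hsummable k ℓ)
      ((summable_pow_natDist hρ0 hρ1 k).mul_left _)
  have h8 : (∑' j : ℕ, (K_F * K_G * ρ ^ (Nat.dist k ℓ)) * ρ ^ (Nat.dist k j)) =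
      (K_F * K_G * ρ ^ (Nat.dist k ℓ)) * ∑' j : ℕ, ρ ^ (Nat.dist k j) :=
    tsum_mul_left
  have h9 : (K_F * K_G * ρ ^ (Nat.dist k ℓ)) * (∑' j : ℕ, ρ ^ (Nat.dist k j)) ≤
      (K_F * K_G * ρ ^ (Nat.dist k ℓ)) * (2 / (1 - ρ)) :=
    mul_le_mul_of_nonneg_left (tsum_pow_natDist_le hρ0 hρ1 k) (by positivity)
  calc ‖∑' j : ℕ, F k j * G j ℓ‖ ≤ ∑' j : ℕ, ‖F k j * G j ℓ‖ := h6
    _ ≤ (K_F * K_G * ρ ^ (Nat.dist k ℓ)) * ∑' j : ℕ, ρ ^ (Nat.dist k j) := by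
        rw [← h8]; exact h7
    _ ≤ (K_F * K_G * ρ ^ (Nat.dist k ℓ)) * (2 / (1 - ρ)) := h9
    _ = K_F * K_G * (2 / (1 - ρ)) * ρ ^ (Nat.dist k ℓ) := by ring
end
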